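/- arXiv:1511.07180 — 7 statements merged into one kernel-verified Lean document; each statement's English description precedes it below -/
import Mathlib

section
/- For every real number α ≥ 1 and every position 1 ≤ j ≤ n, LPal_α[j] = max({0} ∪ { b+ℓ−j : (a,b,ℓ) is a maximal α-gapped palindrome occurrence in w with b ≤ j and (α+1)·(j−b) ≤ (α−1)·ℓ − (b−a−ℓ) }). -/
/- Words are `List α`, positions are 1-based.  `ltr w i` is the letter at position `i`,
`fac w i j` is the factor `w[i..j]` (empty when `i > j`). -/

variable {α : Type*}

def ltr (w : List α) (i : ℕ) : Option α := w[i - 1]?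

def fac (w : List α) (i j : ℕ) : List α := (w.take j).drop (i - 1)

/-- An `A`-gapped palindrome occurrence `(a,b,ℓ)` in `w`:  arms `w[a..a+ℓ-1]` and
`w[b..b+ℓ-1]` with `w[a..a+ℓ-1] = (w[b..b+ℓ-1])^R`, gap length `δ = b-a-ℓ ≥ 0`,
and `ℓ + δ ≤ A·ℓ`. -/
def GapPalOcc (A : ℝ) (w : List α) (a b ℓ : ℕ) : Prop :=
  1 ≤ a ∧ 1 ≤ ℓ ∧ a + ℓ ≤ b ∧ b + ℓ - 1 ≤ w.length ∧
  (∀ t < ℓ, ltr w (a + t) = ltr w (b + ℓ - 1 - t)) ∧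
  (ℓ : ℝ) + ((b - a - ℓ : ℕ) : ℝ) ≤ A * (ℓ : ℝ)

/-- A maximal `A`-gapped palindrome occurrence: the arms can be extended neither at their
outer ends nor at their inner ends. -/
def MaxGapPalOcc (A : ℝ) (w : List α) (a b ℓ : ℕ) : Prop :=
  GapPalOcc A w a b ℓ ∧
  ¬(2 ≤ a ∧ b + ℓ ≤ w.length ∧ ltr w (a - 1) = ltr w (b + ℓ)) ∧
  ¬(2 ≤ b - a - ℓ ∧ ltr w (a + ℓ) = ltr w (b - 1))

/-- `LPal A w j` : the maximal `|u|` such that `u^R·v` is a suffix of `w[1..j-1]`,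
`u` is a prefix of `w[j..n]`, and `|u| + |v| ≤ A·|u|` (0 if no such `u`). -/
noncomputable def LPal (A : ℝ) (w : List α) (j : ℕ) : ℕ :=
  sSup {m | ∃ u v : List α, u.length = m ∧
    (u.reverse ++ v) <:+ fac w 1 (j - 1) ∧ u <+: fac w j w.length ∧
    (u.length : ℝ) + (v.length : ℝ) ≤ A * (u.length : ℝ)}

namespace LPalAux

variable {α : Type*} {A : ℝ} {w : List α}

lemma fac_eq (w : List α) (i j : ℕ) : fac w i j = (w.drop (i-1)).take (j - (i-1)) := by
  simp [fac, List.drop_take]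

lemma length_fac (w : List α) (i j : ℕ) : (fac w i j).length = min j w.length - (i-1) := by
  simp [fac]

lemma getElem?_fac (w : List α) (i j s : ℕ) (hi : 1 ≤ i) (hs : s < min j w.length - (i-1)) :
    (fac w i j)[s]? = ltr w (i + s) := by
  rw [fac_eq, List.getElem?_take, if_pos (by omega), List.getElem?_drop, ltr]
  congr 1
  omega

lemma fac_append (w : List α) {i k j : ℕ} (h1 : 1 ≤ i) (h2 : i ≤ k+1) (h3 : k ≤ j) :
    fac w i k ++ fac w (k+1) j = fac w i j := by
  rw [fac_eq w i k, fac_eq w (k+1) j, fac_eq w i j]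
  have hd : w.drop ((k+1)-1) = (w.drop (i-1)).drop (k-(i-1)) := by
    rw [List.drop_drop]; congr 1; omega
  rw [hd, show j - (i-1) = (k-(i-1)) + (j-(k+1-1)) by omega, List.take_add]

lemma mem_S_of_occ (hA : 1 ≤ A) {j a b ℓ : ℕ} (hjn : j ≤ w.length)
    (ho : GapPalOcc A w a b ℓ) (hb : b ≤ j) (hjlt : j < b + ℓ)
    (hineq : (A+1)*((j:ℝ)-(b:ℝ)) ≤ (A-1)*(ℓ:ℝ) - ((b-a-ℓ:ℕ):ℝ)) :
    ∃ u v : List α, u.length = b + ℓ - j ∧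
      (u.reverse ++ v) <:+ fac w 1 (j-1) ∧ u <+: fac w j w.length ∧
      (u.length : ℝ) + (v.length : ℝ) ≤ A * (u.length : ℝ) := by
  obtain ⟨ha, hℓ, hab, hbn, hpal, hAoc⟩ := ho
  set m := b + ℓ - j with hm
  have hm1 : 1 ≤ m := by omega
  have hmℓ : m ≤ ℓ := by omega
  have ham : a + m ≤ j := by omega
  have hlu : (fac w j (b+ℓ-1)).length = m := by rw [length_fac]; omega
  have hlur : (fac w a (a+m-1)).length = m := by rw [length_fac]; omega
  have hrev : (fac w j (b+ℓ-1)).reverse = fac w a (a+m-1) := by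
    apply List.ext_getElem?
    intro s
    by_cases hs : s < m
    · rw [List.getElem?_reverse (by rw [hlu]; exact hs), hlu,
        getElem?_fac w j _ _ (by omega) (by omega),
        getElem?_fac w a _ _ (by omega) (by omega),
        show j + (m-1-s) = b+ℓ-1-s by omega]
      exact (hpal s (by omega)).symm
    · rw [List.getElem?_eq_none (by rw [List.length_reverse, hlu]; omega),
        List.getElem?_eq_none (by rw [hlur]; omega)]
  refine ⟨fac w j (b+ℓ-1), fac w (a+m) (j-1), hlu, ?_, ?_, ?_⟩
  · rw [hrev]
    have happ := fac_append w (i := a) (k := a+m-1) (j := j-1)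
      (by omega) (by omega) (by omega)
    rw [show a+m-1+1 = a+m by omega] at happ
    rw [happ]
    simpa [fac] using List.drop_suffix (a-1) (w.take (j-1))
  · rw [fac_eq w j (b+ℓ-1), fac_eq w j w.length]
    have ht : (w.drop (j-1)).take (b+ℓ-1-(j-1))
        = ((w.drop (j-1)).take (w.length-(j-1))).take (b+ℓ-1-(j-1)) := by
      rw [List.take_take, Nat.min_eq_left (by omega)]
    rw [ht]
    exact List.take_prefix _ _
  · rw [hlu, length_fac, show min (j-1) w.length - (a+m-1) = j - a - m from by omega]
    have hδ : ((b-a-ℓ:ℕ):ℝ) = (b:ℝ) - a - ℓ := by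
      have h := congrArg (fun x : ℕ => (x:ℝ)) (show (b-a-ℓ) + (a+ℓ) = b by omega)
      push_cast at h; linarith
    have hmr : ((m:ℕ):ℝ) = (b:ℝ)+ℓ-j := by
      have h := congrArg (fun x : ℕ => (x:ℝ)) (show m + j = b + ℓ by omega)
      push_cast at h; linarith
    have hvr : ((j-a-m:ℕ):ℝ) = (j:ℝ)-a-m := by
      have h := congrArg (fun x : ℕ => (x:ℝ)) (show (j-a-m) + (a+m) = j by omega)
      push_cast at h; linarith
    rw [hδ] at hineq
    rw [hmr, hvr, hmr]
    nlinarith [hineq, hA]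

lemma extend (hA : 1 ≤ A) (j : ℕ) :
    ∀ (k a b ℓ : ℕ), w.length ≤ ℓ + k → GapPalOcc A w a b ℓ → b ≤ j →
      (A+1)*((j:ℝ)-(b:ℝ)) ≤ (A-1)*(ℓ:ℝ) - ((b-a-ℓ:ℕ):ℝ) →
      ∃ a' b' ℓ', MaxGapPalOcc A w a' b' ℓ' ∧ b' ≤ j ∧
        (A+1)*((j:ℝ)-(b':ℝ)) ≤ (A-1)*(ℓ':ℝ) - ((b'-a'-ℓ':ℕ):ℝ) ∧ b + ℓ ≤ b' + ℓ' := by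
  intro k
  induction k with
  | zero =>
    intro a b ℓ hk ho hb hineq
    obtain ⟨ha, hℓ, hab, hbn, -, -⟩ := ho
    exfalso; omega
  | succ k ih =>
    intro a b ℓ hk ho hb hineq
    by_cases h1 : 2 ≤ a ∧ b + ℓ ≤ w.length ∧ ltr w (a-1) = ltr w (b+ℓ)
    · obtain ⟨ha2, hbl, heq⟩ := h1
      obtain ⟨ha, hℓ, hab, hbn, hpal, hAoc⟩ := ho
      have hδ : b - (a-1) - (ℓ+1) = b - a - ℓ := by omega
      have ho' : GapPalOcc A w (a-1) b (ℓ+1) := by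
        refine ⟨by omega, by omega, by omega, by omega, ?_, ?_⟩
        · intro t ht
          match t with
          | 0 =>
            rw [show a-1+0 = a-1 by omega, show b+(ℓ+1)-1-0 = b+ℓ by omega]
            exact heq
          | (s+1) =>
            rw [show a-1+(s+1) = a+s by omega, show b+(ℓ+1)-1-(s+1) = b+ℓ-1-s by omega]
            exact hpal s (by omega)
        · rw [hδ]; push_cast; push_cast at hAoc; linarith
      obtain ⟨a', b', ℓ', hmax, hb', hineq', hle⟩ :=
        ih (a-1) b (ℓ+1) (by omega) ho' hb
          (by rw [hδ]; push_cast; push_cast at hineq; linarith)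
      exact ⟨a', b', ℓ', hmax, hb', hineq', by omega⟩
    · by_cases h2 : 2 ≤ b - a - ℓ ∧ ltr w (a+ℓ) = ltr w (b-1)
      · obtain ⟨hd2, heq⟩ := h2
        obtain ⟨ha, hℓ, hab, hbn, hpal, hAoc⟩ := ho
        have hb2 : a + ℓ + 2 ≤ b := by omega
        have hδ : (b-1) - a - (ℓ+1) = (b - a - ℓ) - 2 := by omega
        have hδc : (((b-a-ℓ) - 2 : ℕ):ℝ) = ((b-a-ℓ:ℕ):ℝ) - 2 := by
          have h := congrArg (fun x:ℕ => (x:ℝ)) (show (b-a-ℓ) - 2 + 2 = b-a-ℓ by omega)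
          push_cast at h; linarith
        have hbc : ((b-1:ℕ):ℝ) = (b:ℝ) - 1 := by
          have h := congrArg (fun x:ℕ => (x:ℝ)) (show (b-1) + 1 = b by omega)
          push_cast at h; linarith
        have ho' : GapPalOcc A w a (b-1) (ℓ+1) := by
          refine ⟨ha, by omega, by omega, by omega, ?_, ?_⟩
          · intro t ht
            rw [show (b-1)+(ℓ+1)-1-t = b+ℓ-1-t by omega]
            rcases Nat.lt_succ_iff_lt_or_eq.mp ht with h | h
            · exact hpal t h
            · rw [h, show b+ℓ-1-ℓ = b-1 by omega]
              exact heq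
          · rw [hδ, hδc]; push_cast; push_cast at hAoc; linarith
        obtain ⟨a', b', ℓ', hmax, hb', hineq', hle⟩ :=
          ih a (b-1) (ℓ+1) (by omega) ho' (by omega)
            (by rw [hδ, hδc, hbc]; push_cast; push_cast at hineq; linarith)
        exact ⟨a', b', ℓ', hmax, hb', hineq', by omega⟩
      · exact ⟨a, b, ℓ, ⟨ho, h1, h2⟩, hb, hineq, le_rfl⟩

end LPalAux


theorem LPal_eq_max_over_maximal_gapped_palindromes
    (A : ℝ) (hA : 1 ≤ A) (w : List α) (n : ℕ) (hlen : w.length = n) (hn : 1 ≤ n)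
    (j : ℕ) (hj : 1 ≤ j) (hjn : j ≤ n) :
    LPal A w j = sSup ({0} ∪ {m : ℕ | ∃ a b ℓ : ℕ, MaxGapPalOcc A w a b ℓ ∧ b ≤ j ∧
      (A + 1) * ((j : ℝ) - (b : ℝ)) ≤ (A - 1) * (ℓ : ℝ) - ((b - a - ℓ : ℕ) : ℝ) ∧
      m = b + ℓ - j}) := by
  subst hlen
  rw [LPal]
  have hS0 : 0 ∈ {m | ∃ u v : List α, u.length = m ∧
      (u.reverse ++ v) <:+ fac w 1 (j - 1) ∧ u <+: fac w j w.length ∧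
      (u.length : ℝ) + (v.length : ℝ) ≤ A * (u.length : ℝ)} := by
    refine ⟨[], [], rfl, ?_, ?_, ?_⟩ <;> simp
  have hSbdd : BddAbove {m | ∃ u v : List α, u.length = m ∧
      (u.reverse ++ v) <:+ fac w 1 (j - 1) ∧ u <+: fac w j w.length ∧
      (u.length : ℝ) + (v.length : ℝ) ≤ A * (u.length : ℝ)} := by
    refine ⟨w.length, fun m hm => ?_⟩
    obtain ⟨u, v, hlu, hsuf, hpre, _⟩ := hm
    have h := hpre.length_le
    rw [LPalAux.length_fac] at h
    omega
  have hTbdd : BddAbove ({0} ∪ {m : ℕ | ∃ a b ℓ : ℕ, MaxGapPalOcc A w a b ℓ ∧ b ≤ j ∧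
      (A + 1) * ((j : ℕ) - (b : ℝ)) ≤ (A - 1) * (ℓ : ℝ) - ((b - a - ℓ : ℕ) : ℝ) ∧
      m = b + ℓ - j}) := by
    refine ⟨w.length, fun m hm => ?_⟩
    rcases hm with hm | hm
    · simp only [Set.mem_singleton_iff] at hm; omega
    · obtain ⟨a, b, ℓ, hmax, hb, hineq, rfl⟩ := hm
      obtain ⟨-, -, -, hbn, -, -⟩ := hmax.1
      omega
  apply le_antisymm
  · apply csSup_le ⟨0, hS0⟩
    intro m hm
    obtain ⟨u, v, hlu, hsuf, hpre, hAc⟩ := hm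
    rcases Nat.eq_zero_or_pos m with rfl | hm1
    · exact Nat.zero_le _
    have h1 : m + v.length ≤ j - 1 := by
      have h := hsuf.length_le
      rw [List.length_append, List.length_reverse, hlu, LPalAux.length_fac] at h
      omega
    have h2 : j - 1 + m ≤ w.length := by
      have h := hpre.length_le
      rw [hlu, LPalAux.length_fac] at h
      omega
    set a₀ := j - m - v.length with ha₀
    have hpreq := List.prefix_iff_eq_take.mp hpre
    have hu_get : ∀ s < m, u[s]? = ltr w (j + s) := by
      intro s hs
      conv_lhs => rw [hpreq]
      rw [hlu, List.getElem?_take, if_pos hs,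
        LPalAux.getElem?_fac w j _ _ (by omega) (by omega)]
    have hsufeq := List.suffix_iff_eq_drop.mp hsuf
    have hfl : (fac w 1 (j-1)).length = j - 1 := by rw [LPalAux.length_fac]; omega
    rw [hfl, List.length_append, List.length_reverse, hlu] at hsufeq
    have hr_get : ∀ t < m, ltr w (a₀ + t) = ltr w (j + m - 1 - t) := by
      intro t ht
      have e1 : (u.reverse ++ v)[t]? = u[m - 1 - t]? := by
        rw [List.getElem?_append, if_pos (by rw [List.length_reverse, hlu]; omega),
          List.getElem?_reverse (by rw [hlu]; omega), hlu]
      have e2 : (u.reverse ++ v)[t]? = ltr w (a₀ + t) := by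
        conv_lhs => rw [hsufeq]
        have hfe : fac w 1 (j-1) = w.take (j-1) := by simp [fac]
        rw [hfe, List.getElem?_drop, List.getElem?_take, if_pos (by omega), ltr]
        congr 1
        omega
      rw [← e2, e1, hu_get (m-1-t) (by omega)]
      congr 1
      omega
    have ho : GapPalOcc A w a₀ j m := by
      refine ⟨by omega, hm1, by omega, by omega, ?_, ?_⟩
      · intro t ht
        exact hr_get t ht
      · rw [show j - a₀ - m = v.length from by omega, ← hlu]
        exact hAc
    have hineq₀ : (A+1)*((j:ℝ)-(j:ℝ)) ≤ (A-1)*(m:ℝ) - ((j-a₀-m:ℕ):ℝ) := by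
      rw [show j - a₀ - m = v.length from by omega]
      rw [hlu] at hAc
      have h1A : (1:ℝ) ≤ A := hA
      nlinarith [hAc]
    obtain ⟨a', b', ℓ', hmax, hb', hineq', hle⟩ :=
      LPalAux.extend hA j w.length a₀ j m (by omega) ho le_rfl hineq₀
    refine le_trans (show m ≤ b' + ℓ' - j by omega) (le_csSup hTbdd ?_)
    exact Or.inr ⟨a', b', ℓ', hmax, hb', hineq', rfl⟩
  · refine csSup_le ⟨0, Set.mem_union_left _ rfl⟩ fun m hm => ?_
    rcases hm with hm | hm
    · simp only [Set.mem_singleton_iff] at hm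
      subst hm
      exact Nat.zero_le _
    · obtain ⟨a, b, ℓ, hmax, hb, hineq, rfl⟩ := hm
      rcases le_or_gt (b + ℓ) j with hle | hlt
      · rw [Nat.sub_eq_zero_of_le hle]
        exact Nat.zero_le _
      · obtain ⟨u, v, hlu, hsuf, hpre, hAc⟩ :=
          LPalAux.mem_S_of_occ hA hjn hmax.1 hb hlt hineq
        exact le_csSup hSbdd ⟨u, v, hlu, hsuf, hpre, hAc⟩
end

section
/- Define, for 2 ≤ i ≤ n, L[i] := min{ j : 1 ≤ j < i and LCP(j,i) ≥ LCP(k,i) for all 1 ≤ k < i }, and let L^+[i] := { L^k[i] : k ≥ 1 and L^t[i] ≥ 2 for all 1 ≤ t < k } be the set of iterates of L starting from i (note 1 ≤ L[i] < i, so the iteration is well defined and finite). Let g : {1,...,n} → {1,...,n} and define LPF_g[i] := max({0} ∪ { min(LCP(j,i), i−g(i)−j) : 1 ≤ j ≤ i−g(i)−1 }). Then for every position i with LPF_g[i] ≥ 1, the position B[i] := min{ j ≥ 1 : LCP(j,i) ≥ LPF_g[i] and j + LPF_g[i] ≤ i − g(i) } satisfies B[i] ∈ L^+[i]. -/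
/- Words are `List α`, positions are 1-based.  `ltr w i` is the letter at position `i`. -/

variable {α : Type*}

/-- `LCP w i j` : length of the longest common prefix of the suffixes `w[i..n]`, `w[j..n]`. -/
noncomputable def LCP (w : List α) (i j : ℕ) : ℕ :=
  sSup {ℓ | i + ℓ - 1 ≤ w.length ∧ j + ℓ - 1 ≤ w.length ∧
    ∀ t < ℓ, ltr w (i + t) = ltr w (j + t)}

/-- `Larr w i` = `L[i]` : the smallest position `j < i` maximising `LCP(j,i)`
among all positions `1 ≤ k < i`. -/
noncomputable def Larr (w : List α) (i : ℕ) : ℕ :=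
  sInf {j | 1 ≤ j ∧ j < i ∧ ∀ k, 1 ≤ k → k < i → LCP w k i ≤ LCP w j i}

/-- `L^+[i]` : the set of iterates `L^k[i]`, `k ≥ 1`, where the iteration is carried on
only while the intermediate values are at least `2`. -/
noncomputable def Lplus (w : List α) (i : ℕ) : Set ℕ :=
  {m | ∃ k : ℕ, 1 ≤ k ∧ (∀ t, 1 ≤ t → t < k → 2 ≤ (Larr w)^[t] i) ∧ m = (Larr w)^[k] i}

/-- `LPF_g[i] = max({0} ∪ { min(LCP(j,i), i−g(i)−j) : 1 ≤ j ≤ i−g(i)−1 })`. -/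
noncomputable def LPFg (w : List α) (g : ℕ → ℕ) (i : ℕ) : ℕ :=
  sSup ({0} ∪ {m | ∃ j : ℕ, 1 ≤ j ∧ j ≤ i - g i - 1 ∧ m = min (LCP w j i) (i - g i - j)})

/-- `B[i]` : the smallest position `j ≥ 1` with `LCP(j,i) ≥ LPF_g[i]` and
`j + LPF_g[i] ≤ i − g(i)`. -/
noncomputable def Bpos (w : List α) (g : ℕ → ℕ) (i : ℕ) : ℕ :=
  sInf {j | 1 ≤ j ∧ LPFg w g i ≤ LCP w j i ∧ j + LPFg w g i ≤ i - g i}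

lemma lcp_bdd (w : List α) (i j : ℕ) :
    BddAbove {ℓ | i + ℓ - 1 ≤ w.length ∧ j + ℓ - 1 ≤ w.length ∧
      ∀ t < ℓ, ltr w (i + t) = ltr w (j + t)} := by
  refine ⟨w.length + 1, fun ℓ hℓ => ?_⟩
  have := hℓ.1
  omega

lemma le_LCP_of_mem {w : List α} {i j v : ℕ}
    (h : i + v - 1 ≤ w.length ∧ j + v - 1 ≤ w.length ∧
      ∀ t < v, ltr w (i + t) = ltr w (j + t)) : v ≤ LCP w i j :=
  le_csSup (lcp_bdd w i j) h

lemma LCP_spec {w : List α} {i j : ℕ} (hi : i ≤ w.length + 1) (hj : j ≤ w.length + 1) :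
    i + LCP w i j - 1 ≤ w.length ∧ j + LCP w i j - 1 ≤ w.length ∧
      ∀ t < LCP w i j, ltr w (i + t) = ltr w (j + t) := by
  have h0 : (0:ℕ) ∈ {ℓ | i + ℓ - 1 ≤ w.length ∧ j + ℓ - 1 ≤ w.length ∧
      ∀ t < ℓ, ltr w (i + t) = ltr w (j + t)} :=
    ⟨by omega, by omega, fun t ht => absurd ht (Nat.not_lt_zero t)⟩
  exact Nat.sSup_mem ⟨0, h0⟩ (lcp_bdd w i j)

lemma LCP_mem_of_le {w : List α} {i j v : ℕ} (hi : i ≤ w.length + 1) (hj : j ≤ w.length + 1)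
    (h : v ≤ LCP w i j) :
    i + v - 1 ≤ w.length ∧ j + v - 1 ≤ w.length ∧ ∀ t < v, ltr w (i + t) = ltr w (j + t) := by
  obtain ⟨h1, h2, h3⟩ := LCP_spec (w := w) (i := i) (j := j) hi hj
  exact ⟨by omega, by omega, fun t ht => h3 t (lt_of_lt_of_le ht h)⟩

lemma LCP_symm (w : List α) (i j : ℕ) : LCP w i j = LCP w j i := by
  unfold LCP
  congr 1
  ext ℓ
  constructor <;> rintro ⟨a, b, c⟩ <;> exact ⟨b, a, fun t ht => (c t ht).symm⟩

lemma pos_le_of_LCP_pos {w : List α} {i j : ℕ} (h : 1 ≤ LCP w i j) :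
    i ≤ w.length + 1 ∧ j ≤ w.length + 1 := by
  have hne : Set.Nonempty {ℓ | i + ℓ - 1 ≤ w.length ∧ j + ℓ - 1 ≤ w.length ∧
      ∀ t < ℓ, ltr w (i + t) = ltr w (j + t)} := by
    by_contra hc
    rw [Set.not_nonempty_iff_eq_empty] at hc
    rw [LCP, hc] at h
    simp at h
  obtain ⟨h1, h2, _⟩ := Nat.sSup_mem hne (lcp_bdd w i j)
  constructor <;> omega

lemma LCP_tri {w : List α} {a b c : ℕ} (ha : a ≤ w.length + 1) (hb : b ≤ w.length + 1)
    (hc : c ≤ w.length + 1) : min (LCP w a b) (LCP w b c) ≤ LCP w a c := by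
  obtain ⟨h1, h2, h3⟩ := LCP_mem_of_le ha hb (min_le_left (LCP w a b) (LCP w b c))
  obtain ⟨h4, h5, h6⟩ := LCP_mem_of_le hb hc (min_le_right (LCP w a b) (LCP w b c))
  exact le_LCP_of_mem ⟨h1, h5, fun t ht => (h3 t ht).trans (h6 t ht)⟩

lemma Larr_spec {w : List α} {i : ℕ} (h2 : 2 ≤ i) :
    1 ≤ Larr w i ∧ Larr w i < i ∧ ∀ k, 1 ≤ k → k < i → LCP w k i ≤ LCP w (Larr w i) i := by
  obtain ⟨b, hbmem, hbmax⟩ := Finset.exists_max_image (Finset.Icc 1 (i - 1))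
    (fun j => LCP w j i) ⟨1, by simp; omega⟩
  simp only [Finset.mem_Icc] at hbmem
  have hb : b ∈ {j | 1 ≤ j ∧ j < i ∧ ∀ k, 1 ≤ k → k < i → LCP w k i ≤ LCP w j i} := by
    refine ⟨hbmem.1, by omega, fun k hk1 hk2 => ?_⟩
    exact hbmax k (Finset.mem_Icc.mpr ⟨hk1, by omega⟩)
  exact Nat.sInf_mem ⟨b, hb⟩

lemma Lplus_step {w : List α} {i m : ℕ} (h2 : 2 ≤ Larr w i)
    (hm : m ∈ Lplus w (Larr w i)) : m ∈ Lplus w i := by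
  obtain ⟨k, hk1, hks, hmk⟩ := hm
  refine ⟨k + 1, by omega, ?_, ?_⟩
  · intro t ht1 ht2
    rcases Nat.eq_or_lt_of_le ht1 with h | h
    · rw [← h, Function.iterate_one]; exact h2
    · obtain ⟨s, rfl⟩ : ∃ s, t = s + 1 := ⟨t - 1, by omega⟩
      rw [Function.iterate_succ_apply]
      exact hks s (by omega) (by omega)
  · rw [Function.iterate_succ_apply]; exact hmk

lemma key (w : List α) : ∀ i, 2 ≤ i → i ≤ w.length → ∀ v, 1 ≤ v → ∀ j', 1 ≤ j' → j' < i →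
    v ≤ LCP w j' i → sInf {j | 1 ≤ j ∧ v ≤ LCP w j i} ∈ Lplus w i := by
  intro i
  induction i using Nat.strong_induction_on with
  | _ i ih =>
    intro h2 hin v hv j' hj1 hj2 hjv
    have hSne : Set.Nonempty {j | 1 ≤ j ∧ v ≤ LCP w j i} := ⟨j', hj1, hjv⟩
    obtain ⟨hm1, hmv⟩ := Nat.sInf_mem hSne
    set m := sInf {j | 1 ≤ j ∧ v ≤ LCP w j i} with hm
    have hmle : m ≤ j' := Nat.sInf_le ⟨hj1, hjv⟩
    obtain ⟨hL1, hLi, hLmax⟩ := Larr_spec (w := w) h2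
    have hvL : v ≤ LCP w (Larr w i) i := hjv.trans (hLmax j' hj1 hj2)
    have hmL : m ≤ Larr w i := Nat.sInf_le ⟨hL1, hvL⟩
    by_cases hcase : m = Larr w i
    · exact ⟨1, le_refl 1, fun t ht1 ht2 => absurd ht2 (by omega),
        by rw [Function.iterate_one]; exact hcase⟩
    · have hmLlt : m < Larr w i := lt_of_le_of_ne hmL hcase
      have hL2 : 2 ≤ Larr w i := by omega
      have hmn : m ≤ w.length + 1 := by omega
      have hin' : i ≤ w.length + 1 := by omega
      have hLn : Larr w i ≤ w.length + 1 := by omega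
      have hmLCP : v ≤ LCP w m (Larr w i) := by
        have htri := LCP_tri (w := w) (a := m) (b := i) (c := Larr w i) hmn hin' hLn
        have hsym : LCP w i (Larr w i) = LCP w (Larr w i) i := LCP_symm w i (Larr w i)
        omega
      have hlb : ∀ j ∈ {j | 1 ≤ j ∧ v ≤ LCP w j (Larr w i)}, m ≤ j := by
        intro j hj
        obtain ⟨hj1', hjv'⟩ := hj
        have hjn : j ≤ w.length + 1 := (pos_le_of_LCP_pos (le_trans hv hjv')).1
        have htri := LCP_tri (w := w) (a := j) (b := Larr w i) (c := i) hjn hLn hin'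
        have : v ≤ LCP w j i := le_trans (le_min hjv' hvL) htri
        exact Nat.sInf_le ⟨hj1', this⟩
      have hSinf : sInf {j | 1 ≤ j ∧ v ≤ LCP w j (Larr w i)} = m :=
        le_antisymm (Nat.sInf_le ⟨hm1, hmLCP⟩) (le_csInf ⟨m, hm1, hmLCP⟩ hlb)
      have hrec := ih (Larr w i) hLi hL2 (by omega) v hv m hm1 hmLlt hmLCP
      rw [hSinf] at hrec
      exact Lplus_step hL2 hrec

theorem B_mem_iterated_L
    (w : List α) (n : ℕ) (hlen : w.length = n) (hn : 1 ≤ n)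
    (g : ℕ → ℕ) (hg : ∀ i, 1 ≤ i → i ≤ n → 1 ≤ g i ∧ g i ≤ n)
    (i : ℕ) (hi : 1 ≤ i) (hin : i ≤ n) (hpos : 1 ≤ LPFg w g i) :
    Bpos w g i ∈ Lplus w i := by
  
  subst hlen
  obtain ⟨hg1, hg2⟩ := hg i hi hin
  have hbdd : BddAbove ({0} ∪ {m | ∃ j : ℕ, 1 ≤ j ∧ j ≤ i - g i - 1 ∧
      m = min (LCP w j i) (i - g i - j)}) := by
    refine ⟨i, ?_⟩
    rintro m (hm | ⟨j, hj1, hj2, rfl⟩)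
    · simp only [Set.mem_singleton_iff] at hm; omega
    · have := min_le_right (LCP w j i) (i - g i - j)
      omega
  have hmem : LPFg w g i ∈ ({0} ∪ {m | ∃ j : ℕ, 1 ≤ j ∧ j ≤ i - g i - 1 ∧
      m = min (LCP w j i) (i - g i - j)}) := by
    rw [LPFg]
    exact Nat.sSup_mem ⟨0, Or.inl rfl⟩ hbdd
  rcases hmem with h0 | ⟨j', hj'1, hj'2, hj'eq⟩
  · simp only [Set.mem_singleton_iff] at h0; omega
  · have hLCPj' : LPFg w g i ≤ LCP w j' i := hj'eq ▸ min_le_left _ _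
    have hsub : LPFg w g i ≤ i - g i - j' := hj'eq ▸ min_le_right _ _
    have hj'B : j' + LPFg w g i ≤ i - g i := by omega
    have h2i : 2 ≤ i := by omega
    have hj'lt : j' < i := by omega
    have hj'S : j' ∈ {j | 1 ≤ j ∧ LPFg w g i ≤ LCP w j i} := ⟨hj'1, hLCPj'⟩
    obtain ⟨hm1, hm2⟩ := Nat.sInf_mem ⟨j', hj'S⟩
    have hmlej : sInf {j | 1 ≤ j ∧ LPFg w g i ≤ LCP w j i} ≤ j' := Nat.sInf_le hj'S
    have hmSB : sInf {j | 1 ≤ j ∧ LPFg w g i ≤ LCP w j i} ∈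
        {j | 1 ≤ j ∧ LPFg w g i ≤ LCP w j i ∧ j + LPFg w g i ≤ i - g i} :=
      ⟨hm1, hm2, by omega⟩
    have hEq : Bpos w g i = sInf {j | 1 ≤ j ∧ LPFg w g i ≤ LCP w j i} := by
      rw [Bpos]
      refine le_antisymm (Nat.sInf_le hmSB) ?_
      exact le_csInf ⟨_, hmSB⟩ (fun b hb => Nat.sInf_le ⟨hb.1, hb.2.1⟩)
    rw [hEq]
    exact key w i h2i hin (LPFg w g i) hpos j' hj'1 hj'lt hLCPj'
end

section
/- For every position 1 ≤ c ≤ n, SC[c] = max({0} ∪ { p·ℓ : ℓ ≥ 1 is an integer and w[i'..j'] is a run of w with smallest period p such that i' + p·ℓ ≤ c and c + p·ℓ − 1 ≤ j' }). -/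
/- Words are `List α`, positions are 1-based.  `ltr w i` is the letter at position `i`,
`fac w i j` is the factor `w[i..j]` (empty when `i > j`). -/

variable {α : Type*}

/-- `p` is a period of the word `u` (1-based positions). -/
def IsPeriod (u : List α) (p : ℕ) : Prop :=
  1 ≤ p ∧ p ≤ u.length ∧ ∀ k, 1 ≤ k → k ≤ u.length - p → ltr u k = ltr u (k + p)

/-- `per u` : the smallest period of `u`. -/
noncomputable def per (u : List α) : ℕ := sInf {p | IsPeriod u p}

/-- `w[i'..j']` is a run of `w`: its smallest period `p` satisfies `2p ≤ j'-i'+1`,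
and the factor is maximal with respect to this period. -/
noncomputable def IsRun (w : List α) (i' j' : ℕ) : Prop :=
  1 ≤ i' ∧ i' ≤ j' ∧ j' ≤ w.length ∧
  2 * per (fac w i' j') ≤ j' - i' + 1 ∧
  (i' = 1 ∨ ltr w (i' - 1) ≠ ltr w (i' + per (fac w i' j') - 1)) ∧
  (j' = w.length ∨ ltr w (j' + 1) ≠ ltr w (j' - per (fac w i' j') + 1))

/-- `SC w c` : the longest arm of a square centred at position `c`. -/
noncomputable def SC (w : List α) (c : ℕ) : ℕ :=
  sSup {m | ∃ u : List α, u.length = m ∧ u ≠ [] ∧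
    u <:+ fac w 1 (c - 1) ∧ u <+: fac w c w.length}

/-!
A square of arm `m` centred at `c` is the same thing as an `m`-periodic factor of length `2m`
ending at position `c + m - 1`. A run of period `p` contains such a factor for every multiple
`m = p * ℓ` that fits. Conversely, extend the `m`-periodic factor of a square maximally in both
directions. Its smallest period `p` satisfies `p + m ≤ 2m ≤` its length, so `p ∣ m` by the
Fine–Wilf periodicity lemma; hence any extension with period `p` would also have period `m`,
and the extension is a run of period `p`. So the two sets in the statement coincide.
-/

lemma fac_succ (w : List α) (a b : ℕ) : fac w (a + 1) b = (w.take b).drop a := rfl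

lemma length_fac (w : List α) (a b : ℕ) (hb : b ≤ w.length) :
    (fac w (a + 1) b).length = b - a := by
  simp [fac_succ, hb]

lemma getElem?_fac (w : List α) (a b t : ℕ) :
    (fac w (a + 1) b)[t]? = if a + t < b then w[a + t]? else none := by
  simp [fac_succ, List.getElem?_take]

section Period

variable {u : List α} {p q : ℕ}

lemma isPeriod_iff_hasPeriod : IsPeriod u p ↔ 1 ≤ p ∧ p ≤ u.length ∧ u.HasPeriod p := by
  rw [List.hasPeriod_iff_getElem?]
  refine and_congr_right fun _ => and_congr_right fun _ =>
    ⟨fun h i hi => ?_, fun h k hk hkp => ?_⟩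
  · simpa [ltr] using h (i + 1) (by omega) (by omega)
  · obtain ⟨i, rfl⟩ : ∃ i, k = i + 1 := ⟨k - 1, by omega⟩
    simpa [ltr, Nat.add_right_comm] using h i (by omega)

lemma isPeriod_length (hu : u ≠ []) : IsPeriod u u.length :=
  isPeriod_iff_hasPeriod.2 ⟨List.length_pos_iff.2 hu, le_rfl, u.hasPeriod_of_length_le _ le_rfl⟩

lemma isPeriod_per (h : IsPeriod u q) : IsPeriod u (per u) :=
  Nat.sInf_mem (s := {p | IsPeriod u p}) ⟨q, h⟩

lemma per_le (h : IsPeriod u q) : per u ≤ q :=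
  Nat.sInf_le h

lemma per_dvd (hq : IsPeriod u q) (hlen : per u + q ≤ u.length) : per u ∣ q := by
  obtain ⟨hp1, hpu, hp⟩ := isPeriod_iff_hasPeriod.1 (isPeriod_per hq)
  have hgcd : IsPeriod u ((per u).gcd q) :=
    isPeriod_iff_hasPeriod.2 ⟨Nat.gcd_pos_of_pos_left q hp1,
      (Nat.gcd_le_left q hp1).trans hpu,
      hp.gcd (isPeriod_iff_hasPeriod.1 hq).2.2 (by omega)⟩
  have heq : (per u).gcd q = per u := le_antisymm (Nat.gcd_le_left q hp1) (per_le hgcd)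
  exact heq ▸ Nat.gcd_dvd_right (per u) q

end Period

/-- `p` is a period of `w` on the 0-based half-open interval `[a, b)` of positions. -/
def HasPeriodOn (w : List α) (p a b : ℕ) : Prop :=
  ∀ x, a ≤ x → x + p < b → w[x]? = w[x + p]?

namespace HasPeriodOn

variable {w : List α} {p m a b : ℕ}

lemma mono {a' b' : ℕ} (h : HasPeriodOn w p a b) (ha : a ≤ a') (hb : b' ≤ b) :
    HasPeriodOn w p a' b' :=
  fun x hx hxb => h x (ha.trans hx) (by omega)

lemma add {q : ℕ} (hp : HasPeriodOn w p a b) (hq : HasPeriodOn w q a b) :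
    HasPeriodOn w (p + q) a b := fun x hx hxb =>
  (hp x hx (by omega)).trans (by rw [← add_assoc]; exact hq (x + p) (by omega) (by omega))

lemma of_dvd (h : HasPeriodOn w p a b) (hdvd : p ∣ m) : HasPeriodOn w m a b := by
  obtain ⟨ℓ, rfl⟩ := hdvd
  induction ℓ with
  | zero => exact fun x _ _ => rfl
  | succ ℓ ih => exact ih.add h

lemma extend_left (h : HasPeriodOn w p (a + 1) b) (he : w[a]? = w[a + p]?) :
    HasPeriodOn w p a b := fun x hx hxb =>
  (Nat.eq_or_lt_of_le hx).elim (fun hax => hax ▸ he) (fun hax => h x hax hxb)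

lemma extend_right (h : HasPeriodOn w p a b) (he : w[b - p]? = w[b]?) :
    HasPeriodOn w p a (b + 1) := fun x hx hxb =>
  (Nat.lt_or_eq_of_le (Nat.le_of_lt_succ hxb)).elim (fun hxb => h x hx hxb)
    (fun hxb => by rwa [hxb, show x = b - p by omega])

lemma exists_left_maximal (h : HasPeriodOn w p a b) :
    ∃ a' ≤ a, HasPeriodOn w p a' b ∧ (a' = 0 ∨ ¬HasPeriodOn w p (a' - 1) b) := by
  classical
  have hex : ∃ a', a' ≤ a ∧ HasPeriodOn w p a' b := ⟨a, le_rfl, h⟩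
  obtain ⟨hle, hper⟩ := Nat.find_spec hex
  refine ⟨Nat.find hex, hle, hper, or_iff_not_imp_left.2 fun h0 h' => ?_⟩
  exact Nat.find_min hex (by omega : Nat.find hex - 1 < Nat.find hex) ⟨by omega, h'⟩

lemma exists_right_maximal (h : HasPeriodOn w p a b) (hb : b ≤ w.length) :
    ∃ b', b ≤ b' ∧ b' ≤ w.length ∧ HasPeriodOn w p a b' ∧
      (b' = w.length ∨ ¬HasPeriodOn w p a (b' + 1)) := by
  classical
  let P b' := b ≤ b' ∧ HasPeriodOn w p a b'
  obtain ⟨hle, hper⟩ : P (Nat.findGreatest P w.length) :=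
    Nat.findGreatest_spec hb ⟨le_rfl, h⟩
  have hlen : Nat.findGreatest P w.length ≤ w.length := Nat.findGreatest_le _
  refine ⟨_, hle, hlen, hper, or_iff_not_imp_left.2 fun hlt h' => ?_⟩
  exact Nat.findGreatest_is_greatest (P := P) (Nat.lt_succ_self _) (by omega) ⟨by omega, h'⟩

end HasPeriodOn

lemma isPeriod_fac_iff {w : List α} {p a b : ℕ} (hb : b ≤ w.length) :
    IsPeriod (fac w (a + 1) b) p ↔ 1 ≤ p ∧ a + p ≤ b ∧ HasPeriodOn w p a b := by
  rw [isPeriod_iff_hasPeriod, List.hasPeriod_iff_getElem?, length_fac w a b hb]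
  refine and_congr_right fun _ => and_congr (by omega) ⟨fun h x hx hxb => ?_, fun h t ht => ?_⟩
  · obtain ⟨t, rfl⟩ : ∃ t, x = a + t := ⟨x - a, by omega⟩
    simpa [getElem?_fac, ← add_assoc, show a + t < b by omega, hxb] using h t (by omega)
  · simpa [getElem?_fac, ← add_assoc, show a + t < b by omega, show a + t + p < b by omega]
      using h (a + t) (by omega) (by omega)

lemma IsRun.isPeriod_per {w : List α} {i j : ℕ} (h : IsRun w i j) :
    IsPeriod (fac w i j) (per (fac w i j)) := by
  obtain ⟨hi, hij, hj, -⟩ := h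
  obtain ⟨a, rfl⟩ : ∃ a, i = a + 1 := ⟨i - 1, by omega⟩
  have hne : fac w (a + 1) j ≠ [] :=
    List.ne_nil_of_length_pos (by rw [length_fac w a j hj]; omega)
  exact _root_.isPeriod_per (isPeriod_length hne)

lemma IsRun.hasPeriodOn {w : List α} {i j : ℕ} (h : IsRun w i j) :
    HasPeriodOn w (per (fac w i j)) (i - 1) j := by
  obtain ⟨a, rfl⟩ : ∃ a, i = a + 1 := ⟨i - 1, by have := h.1; omega⟩
  exact ((isPeriod_fac_iff h.2.2.1).1 h.isPeriod_per).2.2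

lemma isRun_of_maximal {w : List α} {m a b : ℕ} (hm : 0 < m) (hab : a + 2 * m ≤ b)
    (hb : b ≤ w.length) (h : HasPeriodOn w m a b)
    (hleft : a = 0 ∨ ¬HasPeriodOn w m (a - 1) b)
    (hright : b = w.length ∨ ¬HasPeriodOn w m a (b + 1)) :
    IsRun w (a + 1) b ∧ per (fac w (a + 1) b) ∣ m := by
  set p := per (fac w (a + 1) b)
  have hm_per : IsPeriod (fac w (a + 1) b) m := (isPeriod_fac_iff hb).2 ⟨hm, by omega, h⟩
  have hpm : p ≤ m := per_le hm_per
  have hdvd : p ∣ m := per_dvd hm_per (by rw [length_fac w a b hb]; omega)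
  have hp : HasPeriodOn w p a b := ((isPeriod_fac_iff hb).1 (isPeriod_per hm_per)).2.2
  -- a `p`-periodic extension would be `m`-periodic, contradicting maximality for `m`
  refine ⟨⟨by omega, by omega, hb, by omega, ?_, ?_⟩, hdvd⟩
  · rcases a with _ | a
    · exact .inl rfl
    · refine .inr fun he => (hleft.resolve_left a.succ_ne_zero) ?_
      exact (hp.extend_left (by simpa [ltr] using he)).of_dvd hdvd
  · refine hright.imp_right fun hmax he => hmax ?_
    exact (hp.extend_right (by simpa [ltr] using he.symm)).of_dvd hdvd

lemma HasPeriodOn.exists_run {w : List α} {m a b : ℕ} (h : HasPeriodOn w m a b) (hm : 0 < m)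
    (hab : a + 2 * m ≤ b) (hb : b ≤ w.length) :
    ∃ i j, IsRun w i j ∧ i ≤ a + 1 ∧ b ≤ j ∧ per (fac w i j) ∣ m := by
  obtain ⟨a', ha', h, hleft⟩ := h.exists_left_maximal
  obtain ⟨b', hb', hb'w, h, hright⟩ := h.exists_right_maximal hb
  have hleft' : a' = 0 ∨ ¬HasPeriodOn w m (a' - 1) b' :=
    hleft.imp_right fun hmax h' => hmax (h'.mono le_rfl hb')
  obtain ⟨hrun, hdvd⟩ := isRun_of_maximal hm (by omega) hb'w h hleft' hright
  exact ⟨a' + 1, b', hrun, by omega, hb', hdvd⟩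

lemma drop_take_eq_take_drop_iff {w : List α} {k m : ℕ} (hmk : m ≤ k) :
    (w.take k).drop (k - m) = (w.drop k).take m ↔ HasPeriodOn w m (k - m) (k + m) := by
  rw [List.ext_getElem?_iff]
  refine ⟨fun h x hx hxb => ?_, fun h t => ?_⟩
  · obtain ⟨t, rfl⟩ : ∃ t, x = k - m + t := ⟨x - (k - m), by omega⟩
    simpa [List.getElem?_take, show t < m by omega, show k - m + t < k by omega,
      show k - m + t + m = k + t by omega] using h t
  · by_cases ht : t < m
    · simpa [List.getElem?_take, ht, show k - m + t < k by omega,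
        show k - m + t + m = k + t by omega] using h (k - m + t) (by omega) (by omega)
    · simp [ht, show ¬k - m + t < k by omega]

lemma exists_square_iff (w : List α) (k m : ℕ) :
    (∃ u : List α, u.length = m ∧ u ≠ [] ∧ u <:+ w.take k ∧ u <+: w.drop k) ↔
      0 < m ∧ m ≤ k ∧ k + m ≤ w.length ∧ HasPeriodOn w m (k - m) (k + m) := by
  constructor
  · rintro ⟨u, rfl, hu, hsuf, hpre⟩
    have hpos := List.length_pos_iff.2 hu
    have hk := hsuf.length_le
    have hkw := hpre.length_le
    simp only [List.length_take, List.length_drop] at hk hkw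
    refine ⟨hpos, by omega, by omega, (drop_take_eq_take_drop_iff (by omega)).1 ?_⟩
    rw [List.suffix_iff_eq_drop, List.length_take, min_eq_left (by omega)] at hsuf
    rw [← hsuf, ← List.prefix_iff_eq_take.1 hpre]
  · rintro ⟨hm, hmk, hkw, h⟩
    refine ⟨(w.drop k).take m, by simp; omega, List.ne_nil_of_length_pos (by simp; omega),
      ?_, List.take_prefix _ _⟩
    rw [← (drop_take_eq_take_drop_iff hmk).2 h]
    exact List.drop_suffix _ _

lemma Nat.sSup_singleton_zero_union (s : Set ℕ) : sSup ({0} ∪ s) = sSup s := by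
  by_cases hs : BddAbove s
  · rw [csSup_union' bddAbove_singleton hs, csSup_singleton]
    exact max_eq_right (Nat.zero_le _)
  · have hs' : ¬BddAbove ({0} ∪ s) := fun h => hs (h.mono Set.subset_union_right)
    rw [csSup_of_not_bddAbove hs, csSup_of_not_bddAbove hs']

theorem SC_eq_max_over_runs_general
    (w : List α) (c : ℕ) :
    SC w c = sSup ({0} ∪ {m : ℕ | ∃ i' j' ℓ : ℕ, 1 ≤ ℓ ∧ IsRun w i' j' ∧
      i' + per (fac w i' j') * ℓ ≤ c ∧ c + per (fac w i' j') * ℓ - 1 ≤ j' ∧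
      m = per (fac w i' j') * ℓ}) := by
  rw [Nat.sSup_singleton_zero_union, SC]
  congr 1
  ext m
  have hfac_left : fac w 1 (c - 1) = w.take (c - 1) := by simp [fac]
  have hfac_right : fac w c w.length = w.drop (c - 1) := by simp [fac]
  simp only [Set.mem_ofPred_eq, hfac_left, hfac_right, exists_square_iff]
  constructor
  · rintro ⟨hm, hmk, hkw, h⟩
    obtain ⟨i, j, hrun, hi, hj, ℓ, hℓ⟩ := h.exists_run hm (by omega) hkw
    exact ⟨i, j, ℓ, Nat.pos_of_mul_pos_left (hℓ ▸ hm), hrun, by omega, by omega, hℓ⟩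
  · rintro ⟨i, j, ℓ, hℓ, hrun, hi, hj, rfl⟩
    have hp : 0 < per (fac w i j) * ℓ := Nat.mul_pos hrun.isPeriod_per.1 hℓ
    have hi1 := hrun.1
    have hjw := hrun.2.2.1
    refine ⟨hp, by omega, by omega, ?_⟩
    exact (hrun.hasPeriodOn.of_dvd (dvd_mul_right _ ℓ)).mono (by omega) (by omega)

theorem SC_eq_max_over_runs
    (w : List α) (n : ℕ) (hlen : w.length = n) (hn : 1 ≤ n)
    (c : ℕ) (hc : 1 ≤ c) (hcn : c ≤ n) :
    SC w c = sSup ({0} ∪ {m : ℕ | ∃ i' j' ℓ : ℕ, 1 ≤ ℓ ∧ IsRun w i' j' ∧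
      i' + per (fac w i' j') * ℓ ≤ c ∧ c + per (fac w i' j') * ℓ - 1 ≤ j' ∧
      m = per (fac w i' j') * ℓ}) :=
  SC_eq_max_over_runs_general w c
end

section
/- For every position 1 ≤ i ≤ n, the set E_i := { m ≥ 1 : i−2m+1 ≥ 1 and w[i−2m+1+t] = w[i−m+1+t] for all 0 ≤ t < m } (the arm lengths of squares ending at position i) is nonempty if and only if the set R'_i := { per(w[i'..j']) : w[i'..j'] is a run of w with i' + 2·per(w[i'..j']) − 1 ≤ i ≤ j' } is nonempty, and in that case min E_i = min R'_i (i.e., the shortest square ending at position i has arm length equal to the minimum period of a run that contains a full square of its period ending at i). -/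
/- Words are `List α`, positions are 1-based.  `ltr w i` is the letter at position `i`,
`fac w i j` is the factor `w[i..j]` (empty when `i > j`). -/

variable {α : Type*}

/-- `E_i` : the set of arm lengths of squares ending at position `i`
(`m ≥ 1` with `i−2m+1 ≥ 1`, i.e. `2m ≤ i`, and `w[i−2m+1+t] = w[i−m+1+t]` for `t < m`). -/
def EiSet (w : List α) (i : ℕ) : Set ℕ :=
  {m | 1 ≤ m ∧ 2 * m ≤ i ∧
    ∀ t < m, ltr w (i - 2 * m + 1 + t) = ltr w (i - m + 1 + t)}

/-- `R'_i` : the set of periods of runs of `w` containing a full square of their period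
ending at position `i`. -/
noncomputable def RiSet (w : List α) (i : ℕ) : Set ℕ :=
  {p | ∃ i' j' : ℕ, IsRun w i' j' ∧ p = per (fac w i' j') ∧
    i' + 2 * p - 1 ≤ i ∧ i ≤ j'}

/-- period `p` on the index interval `[a, b]` of `w`. -/
def PerOn (w : List α) (a b p : ℕ) : Prop :=
  ∀ k, a ≤ k → k + p ≤ b → ltr w k = ltr w (k + p)

lemma ltr_fac (w : List α) {i' j' k : ℕ} (h1 : 1 ≤ i') (h2 : 1 ≤ k)
    (h3 : i' + k - 1 ≤ j') : ltr (fac w i' j') k = ltr w (i' + k - 1) := by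
  unfold fac ltr
  rw [List.getElem?_drop, List.getElem?_take]
  rw [if_pos (by omega)]
  congr 1
  omega

lemma fac_length (w : List α) {i' j' : ℕ} (h1 : 1 ≤ i') (h2 : i' ≤ j')
    (h3 : j' ≤ w.length) : (fac w i' j').length = j' - i' + 1 := by
  unfold fac
  rw [List.length_drop, List.length_take]
  omega

lemma isPeriod_iff_perOn (w : List α) {i' j' p : ℕ} (h1 : 1 ≤ i') (h2 : i' ≤ j')
    (h3 : j' ≤ w.length) (hp : 1 ≤ p) (hple : p ≤ j' - i' + 1) :
    IsPeriod (fac w i' j') p ↔ PerOn w i' j' p := by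
  have hl := fac_length w h1 h2 h3
  constructor
  · rintro ⟨-, -, hper⟩ k hk1 hk2
    have hk' := hper (k - i' + 1) (by omega) (by omega)
    rw [ltr_fac w h1 (by omega) (by omega), ltr_fac w h1 (by omega) (by omega)] at hk'
    have e1 : i' + (k - i' + 1) - 1 = k := by omega
    have e2 : i' + (k - i' + 1 + p) - 1 = k + p := by omega
    rwa [e1, e2] at hk'
  · intro hP
    refine ⟨hp, by omega, fun k hk1 hk2 => ?_⟩
    rw [ltr_fac w h1 hk1 (by omega), ltr_fac w h1 (by omega) (by omega)]
    have := hP (i' + k - 1) (by omega) (by omega)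
    have e : i' + (k + p) - 1 = i' + k - 1 + p := by omega
    rwa [e]

/-- Every element of `R'_i` is an element of `E_i`. -/
lemma RiSet_subset_EiSet (w : List α) (i : ℕ) : RiSet w i ⊆ EiSet w i := by
  rintro p ⟨i', j', ⟨hi'1, hij, hj'n, h2p, -, -⟩, hpper, hsq, hij'⟩
  -- per membership
  have hne : {q | IsPeriod (fac w i' j') q}.Nonempty := by
    refine ⟨(fac w i' j').length, le_trans ?_ le_rfl, le_rfl, fun k hk1 hk2 => by omega⟩
    rw [fac_length w hi'1 hij hj'n]; omega
  have hmem : IsPeriod (fac w i' j') p := by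
    rw [hpper]; exact Nat.sInf_mem hne
  obtain ⟨hp1, hplen, -⟩ := hmem
  rw [fac_length w hi'1 hij hj'n] at hplen
  have hPer : PerOn w i' j' p :=
    (isPeriod_iff_perOn w hi'1 hij hj'n hp1 hplen).mp (by rw [hpper]; exact Nat.sInf_mem hne)
  refine ⟨hp1, by omega, fun t ht => ?_⟩
  have := hPer (i - 2 * p + 1 + t) (by omega) (by omega)
  have e : i - 2 * p + 1 + t + p = i - p + 1 + t := by omega
  rwa [e] at this

/-- If `m` is a minimal element of `E_i`, then `m ∈ R'_i`. -/
lemma min_EiSet_mem_RiSet (w : List α) (i : ℕ) (hin : i ≤ w.length) (m : ℕ)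
    (hm : m ∈ EiSet w i) (hmin : ∀ m' ∈ EiSet w i, m ≤ m') : m ∈ RiSet w i := by
  classical
  obtain ⟨hm1, h2m, hsq⟩ := hm
  -- the square gives period m on [i-2m+1, i]
  have hsq' : ∀ k, i - 2 * m + 1 ≤ k → k + m ≤ i → ltr w k = ltr w (k + m) := by
    intro k hk1 hk2
    have := hsq (k - (i - 2 * m + 1)) (by omega)
    have e1 : i - 2 * m + 1 + (k - (i - 2 * m + 1)) = k := by omega
    have e2 : i - m + 1 + (k - (i - 2 * m + 1)) = k + m := by omega
    rwa [e1, e2] at this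
  -- left extension
  set S : Set ℕ := {l | 1 ≤ l ∧ ∀ k, l ≤ k → k + m ≤ i → ltr w k = ltr w (k + m)} with hS
  have hSne : S.Nonempty := ⟨i - 2 * m + 1, by omega, hsq'⟩
  set i' := sInf S with hi'
  have hi'mem : i' ∈ S := Nat.sInf_mem hSne
  have hi'le : i' ≤ i - 2 * m + 1 := Nat.sInf_le ⟨by omega, hsq'⟩
  have hi'1 : 1 ≤ i' := hi'mem.1
  -- right extension
  set P : ℕ → Prop := fun j => ∀ k, i - 2 * m + 1 ≤ k → k + m ≤ j → ltr w k = ltr w (k + m)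
    with hP
  set j' := Nat.findGreatest P w.length with hj'
  have hPi : P i := hsq'
  have hij' : i ≤ j' := Nat.le_findGreatest hin hPi
  have hj'n : j' ≤ w.length := Nat.findGreatest_le w.length
  have hPj' : P j' := Nat.findGreatest_spec hin hPi
  -- combined period m on [i', j']
  have hPer : PerOn w i' j' m := by
    intro k hk1 hk2
    by_cases h : k + m ≤ i
    · exact hi'mem.2 k hk1 h
    · exact hPj' k (by omega) hk2
  have hij : i' ≤ j' := by omega
  have hIsP : IsPeriod (fac w i' j') m :=
    (isPeriod_iff_perOn w hi'1 hij hj'n hm1 (by omega)).mpr hPer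
  -- the smallest period of fac w i' j'
  set p := per (fac w i' j') with hpdef
  have hne : {q | IsPeriod (fac w i' j') q}.Nonempty := ⟨m, hIsP⟩
  have hpmem : IsPeriod (fac w i' j') p := Nat.sInf_mem hne
  have hpm : p ≤ m := Nat.sInf_le hIsP
  obtain ⟨hp1, hplen, -⟩ := hpmem
  rw [fac_length w hi'1 hij hj'n] at hplen
  have hPerp : PerOn w i' j' p :=
    (isPeriod_iff_perOn w hi'1 hij hj'n hp1 hplen).mp (Nat.sInf_mem hne)
  -- p ∈ E_i, hence p = m by minimality
  have hpE : p ∈ EiSet w i := by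
    refine ⟨hp1, by omega, fun t ht => ?_⟩
    have := hPerp (i - 2 * p + 1 + t) (by omega) (by omega)
    have e : i - 2 * p + 1 + t + p = i - p + 1 + t := by omega
    rwa [e] at this
  have hpm' : p = m := le_antisymm hpm (hmin p hpE)
  have hgA : 2 * per (fac w i' j') ≤ j' - i' + 1 := by rw [← hpdef, hpm']; omega
  have hgB : m = per (fac w i' j') := by rw [← hpdef, hpm']
  have hgC : i' + 2 * m - 1 ≤ i := by omega
  -- run maximality conditions
  refine ⟨i', j', ⟨hi'1, hij, hj'n, hgA, ?_, ?_⟩, hgB, hgC, hij'⟩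
  · -- left maximality
    rw [← hpdef, hpm']
    by_cases h : i' = 1
    · exact Or.inl h
    · refine Or.inr fun heq => ?_
      have hnot : i' - 1 ∉ S := Nat.notMem_of_lt_sInf (by omega)
      apply hnot
      refine ⟨by omega, fun k hk1 hk2 => ?_⟩
      by_cases hk : i' ≤ k
      · exact hi'mem.2 k hk (by omega)
      · have hk' : k = i' - 1 := by omega
        have e : i' + m - 1 = i' - 1 + m := by omega
        rw [hk']
        rw [e] at heq
        exact heq
  · -- right maximality
    rw [← hpdef, hpm']
    by_cases h : j' = w.length
    · exact Or.inl h
    · refine Or.inr fun heq => ?_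
      have hnot : ¬ P (j' + 1) :=
        Nat.findGreatest_is_greatest (Nat.lt_succ_self j') (by omega)
      apply hnot
      intro k hk1 hk2
      by_cases hk : k + m ≤ j'
      · exact hPj' k hk1 hk
      · have hk' : k = j' + 1 - m := by omega
        have e1 : k = j' - m + 1 := by omega
        have e3 : j' - m + 1 + m = j' + 1 := by omega
        rw [e1, e3]
        exact heq.symm

theorem shortest_square_ending_eq_min_run_period
    (w : List α) (n : ℕ) (hlen : w.length = n) (hn : 1 ≤ n)
    (i : ℕ) (hi : 1 ≤ i) (hin : i ≤ n) :
    ((EiSet w i).Nonempty ↔ (RiSet w i).Nonempty) ∧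
    ((EiSet w i).Nonempty → sInf (EiSet w i) = sInf (RiSet w i)) := by
  have hin' : i ≤ w.length := by omega
  have key : (EiSet w i).Nonempty → sInf (EiSet w i) ∈ RiSet w i := fun hE =>
    min_EiSet_mem_RiSet w i hin' _ (Nat.sInf_mem hE) (fun m' hm' => Nat.sInf_le hm')
  constructor
  · constructor
    · intro hE; exact ⟨_, key hE⟩
    · rintro ⟨p, hp⟩; exact ⟨p, RiSet_subset_EiSet w i hp⟩
  · intro hE
    have h1 : sInf (RiSet w i) ≤ sInf (EiSet w i) := Nat.sInf_le (key hE)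
    have h2 : sInf (EiSet w i) ≤ sInf (RiSet w i) :=
      Nat.sInf_le (RiSet_subset_EiSet w i (Nat.sInf_mem ⟨_, key hE⟩))
    omega
end

section
/- Let u be a nonempty word and let p := per(uu) be the smallest period of the square uu. Then p divides |u|, the prefix z of u of length p is primitive, and u = z^{|u|/p}. -/
/- Words are `List α`, positions are 1-based.  `ltr w i` is the letter at position `i`. -/

variable {α : Type*}

/-- `repw z k = z^k`, the `k`-th power of the word `z`. -/
def repw (z : List α) (k : ℕ) : List α := (List.replicate k z).flatten

/-- A word is primitive if it cannot be written as `y^k` with `k ≥ 2`. -/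
def Primitive (z : List α) : Prop := ∀ (y : List α) (k : ℕ), 2 ≤ k → z ≠ repw y k

lemma isPeriod_iff {w : List α} {p : ℕ} (h1 : 1 ≤ p) (h2 : p ≤ w.length) :
    IsPeriod w p ↔ w.drop p = w.take (w.length - p) := by
  constructor
  · rintro ⟨-, -, h⟩
    apply List.ext_getElem?
    intro i
    rw [List.getElem?_drop, List.getElem?_take]
    by_cases hi : i < w.length - p
    · have := h (i + 1) (by omega) (by omega)
      simp only [ltr, Nat.add_sub_cancel] at this
      rw [if_pos hi, this]
      congr 1
      omega
    · rw [if_neg hi, List.getElem?_eq_none (by omega)]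
  · intro hd
    refine ⟨h1, h2, fun k hk1 hk2 => ?_⟩
    have := congrArg (fun l => l[k - 1]?) hd
    simp only [List.getElem?_drop, List.getElem?_take] at this
    rw [if_pos (by omega)] at this
    simp only [ltr]
    rw [← this]
    congr 1
    omega

lemma repw_zero (z : List α) : repw z 0 = [] := rfl

lemma repw_succ (z : List α) (k : ℕ) : repw z (k + 1) = z ++ repw z k := by
  simp [repw, List.replicate_succ]

lemma repw_succ' (z : List α) (k : ℕ) : repw z (k + 1) = repw z k ++ z := by
  simp [repw, List.replicate_succ']

lemma length_repw (z : List α) (k : ℕ) : (repw z k).length = k * z.length := by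
  induction k with
  | zero => simp [repw]
  | succ k ih => rw [repw_succ, List.length_append, ih]; ring

lemma repw_add (z : List α) (a b : ℕ) : repw z (a + b) = repw z a ++ repw z b := by
  induction a with
  | zero => simp [repw_zero]
  | succ a ih =>
      rw [show a + 1 + b = (a + b) + 1 from by ring, repw_succ, repw_succ, ih, List.append_assoc]

lemma repw_repw (y : List α) (k m : ℕ) : repw (repw y k) m = repw y (m * k) := by
  induction m with
  | zero => simp [repw_zero]
  | succ m ih => rw [repw_succ, ih, show (m + 1) * k = k + m * k from by ring, repw_add]

lemma eq_repw {p : ℕ} (hp : 1 ≤ p) :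
    ∀ (k : ℕ) (u : List α), u.length = k * p →
      u.drop p = u.take (u.length - p) → u = repw (u.take p) k := by
  intro k
  induction k with
  | zero =>
      intro u h _
      simp only [Nat.zero_mul] at h
      simp [List.eq_nil_of_length_eq_zero h, repw_zero]
  | succ k ih =>
      intro u hlen hdt
      have hplen : p ≤ u.length := hlen ▸ Nat.le_mul_of_pos_left p (by omega)
      have hkp : k * p ≤ p * k := by ring_nf; omega
      rw [repw_succ]
      nth_rewrite 1 [← List.take_append_drop p u]
      congr 1
      rw [hdt]
      rcases Nat.eq_zero_or_pos k with hk | hk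
      · subst hk
        have : u.length - p = 0 := by rw [hlen]; omega
        simp [this, repw_zero]
      · have hm : u.length - p = k * p := by rw [hlen]; ring_nf; omega
        have hpm : p ≤ u.length - p := by
          rw [hm]; exact Nat.le_mul_of_pos_left p hk
        have hml : (u.take (u.length - p)).length = u.length - p := by
          rw [List.length_take]; omega
        have hlen' : (u.take (u.length - p)).length = k * p := by rw [hml, hm]
        have hdt' : (u.take (u.length - p)).drop p
            = (u.take (u.length - p)).take ((u.take (u.length - p)).length - p) := by
          rw [hml, List.drop_take, hdt, List.take_take]
        have h2 := ih (u.take (u.length - p)) hlen' hdt'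
        rw [h2]
        congr 1
        rw [List.take_take]
        congr 1
        omega

lemma isPeriod_repw (y : List α) (M : ℕ) (hy : y ≠ []) (hM : 1 ≤ M) :
    IsPeriod (repw y M) y.length := by
  have hylen : 1 ≤ y.length := List.length_pos_iff.mpr hy
  have hlen : (repw y M).length = M * y.length := length_repw y M
  rw [isPeriod_iff hylen (by rw [hlen]; nlinarith)]
  obtain ⟨M', rfl⟩ : ∃ M', M = M' + 1 := ⟨M - 1, by omega⟩
  nth_rewrite 1 [repw_succ y M']
  rw [List.drop_left]
  nth_rewrite 2 [repw_succ' y M']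
  rw [List.take_left' (by rw [length_repw, hlen]; ring_nf; omega)]

theorem smallest_period_of_square
    (u : List α) (hu : u ≠ []) :
    per (u ++ u) ∣ u.length ∧
    Primitive (u.take (per (u ++ u))) ∧
    u = repw (u.take (per (u ++ u))) (u.length / per (u ++ u)) := by
  have hn : 1 ≤ u.length := List.length_pos_iff.mpr hu
  set n := u.length with hn_def
  have hlen2 : (u ++ u).length = n + n := by simp [hn_def]
  have hnper : IsPeriod (u ++ u) n := by
    rw [isPeriod_iff hn (by omega), hlen2, show n + n - n = n from by omega]
    rw [List.drop_left' hn_def.symm]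
    rw [List.take_left' hn_def.symm]
  have hne : {q | IsPeriod (u ++ u) q}.Nonempty := ⟨n, hnper⟩
  set p := per (u ++ u) with hp_def
  have hmem : IsPeriod (u ++ u) p := by
    rw [hp_def, per]; exact Nat.sInf_mem hne
  have hminim : ∀ q, IsPeriod (u ++ u) q → p ≤ q := by
    intro q hq
    rw [hp_def, per]; exact Nat.sInf_le hq
  have hp1 : 1 ≤ p := hmem.1
  have hpn : p ≤ n := hminim n hnper
  -- the main split equation from period p of u ++ u
  have hsplit : u.drop p ++ u = u ++ u.take (n - p) := by
    have h := (isPeriod_iff hp1 (by rw [hlen2]; omega)).mp hmem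
    rwa [hlen2, List.drop_append, List.take_append,
        show p - u.length = 0 from by omega, List.drop_zero,
        show n + n - p - u.length = n - p from by omega,
        List.take_of_length_le (show u.length ≤ n + n - p from by omega)] at h
  have hdt : u.drop p = u.take (n - p) := by
    have h := congrArg (List.take (n - p)) hsplit
    rw [List.take_left' (by rw [List.length_drop, ← hn_def])] at h
    rwa [List.take_append_of_le_length (by omega)] at h
  have hr : u.rotate (n - p) = u := by
    have h := congrArg (List.drop (n - p)) hsplit
    rw [List.drop_left' (by rw [List.length_drop, ← hn_def]),
        List.drop_append,
        show n - p - u.length = 0 from by omega, List.drop_zero] at h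
    rw [List.rotate_eq_drop_append_take (by omega)]
    exact h.symm
  have hrotp : u.rotate p = u := by
    conv_lhs => rw [← hr]
    rw [List.rotate_rotate, show n - p + p = n from by omega, hn_def, List.rotate_length]
  have hrotmul : ∀ a : ℕ, u.rotate (a * p) = u := by
    intro a
    induction a with
    | zero => simp
    | succ a ih =>
        rw [show (a + 1) * p = a * p + p from by ring, ← List.rotate_rotate, ih, hrotp]
  -- rotation invariance gives periods of u ++ u
  have key : ∀ d, 1 ≤ d → d ≤ n → u.rotate d = u → IsPeriod (u ++ u) d := by
    intro d h1 h2 hrd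
    have hu2 : u = u.drop d ++ u.take d := by
      conv_lhs => rw [← hrd]
      exact List.rotate_eq_drop_append_take (by omega)
    rw [isPeriod_iff h1 (by rw [hlen2]; omega), hlen2,
        List.drop_append, List.take_append,
        show d - u.length = 0 from by omega, List.drop_zero,
        show n + n - d - u.length = n - d from by omega,
        List.take_of_length_le (show u.length ≤ n + n - d from by omega)]
    have htk : u.take (n - d) = u.drop d := by
      nth_rewrite 1 [hu2]
      exact List.take_left' (by rw [List.length_drop, ← hn_def])
    calc u.drop d ++ u = u.drop d ++ (u.take d ++ u.drop d) := by rw [List.take_append_drop]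
      _ = (u.drop d ++ u.take d) ++ u.drop d := by rw [List.append_assoc]
      _ = u ++ u.drop d := by rw [← hu2]
      _ = u ++ u.take (n - d) := by rw [htk]
  -- gcd argument
  have hg1 : 1 ≤ Nat.gcd p n := Nat.gcd_pos_of_pos_left n hp1
  have hgn : Nat.gcd p n ≤ n := Nat.le_of_dvd (by omega) (Nat.gcd_dvd_right p n)
  have ha : ∃ a : ℕ, (a * p) % n = (Nat.gcd p n) % n := by
    have hb := Nat.gcd_eq_gcd_ab p n
    have hn0 : (n : ℤ) ≠ 0 := by exact_mod_cast (by omega : n ≠ 0)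
    refine ⟨((Nat.gcdA p n) % n).toNat, ?_⟩
    have hcast : (((Nat.gcdA p n) % n).toNat : ℤ) = Nat.gcdA p n % n :=
      Int.toNat_of_nonneg (Int.emod_nonneg _ hn0)
    apply @Nat.cast_injective ℤ _ _
    rw [Int.natCast_mod, Int.natCast_mod]
    push_cast [hcast]
    calc (Nat.gcdA p n % n) * p % n
        = (Nat.gcdA p n % n % n) * ((p : ℤ) % n) % n := Int.mul_emod _ _ _
      _ = (Nat.gcdA p n % n) * ((p : ℤ) % n) % n := by rw [Int.emod_emod_of_dvd _ dvd_rfl]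
      _ = (Nat.gcdA p n) * (p : ℤ) % n := (Int.mul_emod _ _ _).symm
      _ = ((Nat.gcd p n : ℤ) + (n : ℤ) * (- Nat.gcdB p n)) % n := by
          congr 1
          rw [hb]; ring
      _ = (Nat.gcd p n : ℤ) % n := Int.add_mul_emod_self_left _ _ _
  have hrotg : u.rotate (Nat.gcd p n) = u := by
    obtain ⟨a, ha⟩ := ha
    have h1 : u.rotate (Nat.gcd p n) = u.rotate (a * p) := by
      rw [← List.rotate_mod u (Nat.gcd p n), ← List.rotate_mod u (a * p), ← hn_def, ha]
    rw [h1, hrotmul a]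
  have hpg : p ≤ Nat.gcd p n := hminim _ (key _ hg1 hgn hrotg)
  have hgp : Nat.gcd p n ≤ p := Nat.le_of_dvd (by omega) (Nat.gcd_dvd_left p n)
  have hdvd : p ∣ n := by
    have : Nat.gcd p n = p := le_antisymm hgp hpg
    rw [← this]; exact Nat.gcd_dvd_right p n
  -- u = z^(n/p)
  have hurep : u = repw (u.take p) (n / p) := by
    apply eq_repw hp1
    · rw [← hn_def, Nat.div_mul_cancel hdvd]
    · rw [← hn_def]; exact hdt
  refine ⟨hdvd, ?_, hurep⟩
  -- primitivity
  intro y k hk heq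
  have hzlen : (u.take p).length = p := by rw [List.length_take]; omega
  have hylen : p = k * y.length := by rw [← hzlen, heq, length_repw]
  have hyl : 1 ≤ y.length := by
    rcases Nat.eq_zero_or_pos y.length with h | h
    · rw [h, Nat.mul_zero] at hylen; omega
    · exact h
  have hylt : y.length < p := by nlinarith
  have hy : y ≠ [] := by
    intro h; rw [h] at hyl; simp at hyl
  have hq1 : 1 ≤ n / p := (Nat.one_le_div_iff (by omega)).mpr hpn
  have huu : u ++ u = repw y ((n / p + n / p) * k) := by
    calc u ++ u = repw (u.take p) (n / p) ++ repw (u.take p) (n / p) := by rw [← hurep]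
      _ = repw (u.take p) (n / p + n / p) := (repw_add _ _ _).symm
      _ = repw (repw y k) (n / p + n / p) := by rw [heq]
      _ = repw y ((n / p + n / p) * k) := repw_repw _ _ _
  have hM : 1 ≤ (n / p + n / p) * k := by nlinarith
  have hperiody : IsPeriod (u ++ u) y.length := by
    rw [huu]; exact isPeriod_repw y _ hy hM
  have := hminim _ hperiody
  omega
end

section
/- Fix a position 2 ≤ c ≤ n and suppose the set S_c := { m ≥ 1 : c−m ≥ 1, c+m−1 ≤ n, and w[c−m+t] = w[c+t] for all 0 ≤ t < m } is nonempty, with minimum m₀. Then the word w[c..c+m₀−1] is primitive; that is, the shortest square centred at any position of a word is primitively rooted. -/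
/- Words are `List α`, positions are 1-based.  `ltr w i` is the letter at position `i`,
`fac w i j` is the factor `w[i..j]` (empty when `i > j`). -/

variable {α : Type*}

/-- `S_c` : the set of arm lengths of squares centred at position `c`. -/
def ScSet (w : List α) (c : ℕ) : Set ℕ :=
  {m | 1 ≤ m ∧ 1 ≤ c - m ∧ c + m - 1 ≤ w.length ∧
    ∀ t < m, ltr w (c - m + t) = ltr w (c + t)}

lemma repw_length (y : List α) (k : ℕ) : (repw y k).length = k * y.length := by
  simp [repw, Nat.mul_comm]

lemma repw_getElem? (y : List α) (k i : ℕ) (h : i < k * y.length) :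
    (repw y k)[i]? = y[i % y.length]? := by
  induction k generalizing i with
  | zero => simp at h
  | succ k ih =>
    have hsp : repw y (k + 1) = y ++ repw y k := by
      simp [repw, List.replicate_succ]
    rw [hsp]
    by_cases hi : i < y.length
    · rw [List.getElem?_append_left hi, Nat.mod_eq_of_lt hi]
    · push_neg at hi
      rw [Nat.succ_mul] at h
      rw [List.getElem?_append_right hi, ih _ (by omega)]
      congr 1
      conv_rhs => rw [← Nat.sub_add_cancel hi, Nat.add_mod_right]

theorem shortest_centred_square_primitively_rooted
    (w : List α) (n : ℕ) (hlen : w.length = n) (hn : 1 ≤ n)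
    (c : ℕ) (hc : 2 ≤ c) (hcn : c ≤ n) (hne : (ScSet w c).Nonempty) :
    Primitive (fac w c (c + sInf (ScSet w c) - 1)) := by
  intro y k hk heq
  set m := sInf (ScSet w c) with hm
  obtain ⟨hm1, hmc, hmn, hper⟩ := Nat.sInf_mem hne
  rw [← hm] at hm1 hmc hmn hper
  rw [hlen] at hmn
  have hmc' : m + 1 ≤ c := by omega
  -- length of the factor is m
  have hfac_len : (fac w c (c + m - 1)).length = m := by
    simp only [fac, List.length_drop, List.length_take, hlen]
    omega
  set d := y.length with hd
  have hyk : k * d = m := by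
    rw [hd, ← repw_length y k, ← heq, hfac_len]
  have hd1 : 1 ≤ d := by
    rcases Nat.eq_zero_or_pos d with h | h
    · rw [h, Nat.mul_zero] at hyk; omega
    · exact h
  have hdm : 2 * d ≤ m := by
    calc 2 * d ≤ k * d := Nat.mul_le_mul_right d hk
    _ = m := hyk
  -- letters inside the factor
  have hltr : ∀ s, s < m → ltr w (c + s) = y[s % d]? := by
    intro s hs
    have h1 : ltr w (c + s) = (fac w c (c + m - 1))[s]? := by
      simp only [ltr, fac, List.getElem?_drop, List.getElem?_take]
      rw [if_pos (by omega)]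
      congr 1
      omega
    rw [h1, heq, repw_getElem? y k s (by rw [← hd] at *; rw [hyk]; exact hs)]
  -- d is in ScSet
  have hdS : d ∈ ScSet w c := by
    refine ⟨hd1, by omega, by omega, fun t ht => ?_⟩
    have h1 : ltr w (c - d + t) = ltr w (c + (m - d + t)) := by
      have h2 := hper (m - d + t) (by omega)
      have harith : c - m + (m - d + t) = c - d + t := by omega
      rw [harith] at h2
      exact h2
    rw [h1, hltr (m - d + t) (by omega), hltr t (by omega)]
    congr 1
    -- (m - d + t) % d = t % d
    obtain ⟨e, he⟩ : d ∣ m := ⟨k, by rw [← hyk, Nat.mul_comm]⟩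
    have he0 : e ≠ 0 := by rintro rfl; simp at he; omega
    obtain ⟨e', rfl⟩ : ∃ e', e = e' + 1 := ⟨e - 1, by omega⟩
    rw [Nat.mul_succ] at he
    have harith2 : m - d + t = d * e' + t := by omega
    rw [harith2, Nat.mul_add_mod]
  have : m ≤ d := Nat.sInf_le hdS
  omega
end

section
/- Let g, G be integers with 0 ≤ g < G ≤ n and let 1 ≤ i ≤ n. Define LPrF_{g,G}[i] := max{|u| : there exists a word v with g ≤ |v| < G such that u^R·v is a suffix of w[1..i−1] and u is a prefix of w[i..n]}, with max of the empty set equal to 0. Then LPrF_{g,G}[i] = max({0} ∪ { LCPR(j,i) : max(1, i−G) ≤ j ≤ i−g−1 }). -/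
/- Words are `List α`, positions are 1-based.  `ltr w i` is the letter at position `i`,
`fac w i j` is the factor `w[i..j]` (empty when `i > j`). -/

variable {α : Type*}

/-- `LCPR w j i` : length of the longest common prefix of `(w[1..j])^R` and `w[i..n]`. -/
noncomputable def LCPR (w : List α) (j i : ℕ) : ℕ :=
  sSup {ℓ | ℓ ≤ j ∧ i + ℓ - 1 ≤ w.length ∧ ∀ t < ℓ, ltr w (j - t) = ltr w (i + t)}

/-- `LPrF_{g,G}[i]` : the maximal `|u|` such that for some `v` with `g ≤ |v| < G`,
`u^R·v` is a suffix of `w[1..i-1]` and `u` is a prefix of `w[i..n]` (0 if none). -/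
noncomputable def LPrFgG (w : List α) (g G i : ℕ) : ℕ :=
  sSup {m | ∃ u v : List α, u.length = m ∧ g ≤ v.length ∧ v.length < G ∧
    (u.reverse ++ v) <:+ fac w 1 (i - 1) ∧ u <+: fac w i w.length}

lemma LCPR_mem (w : List α) (j i : ℕ) (hi : i - 1 ≤ w.length) :
    LCPR w j i ≤ j ∧ i + LCPR w j i - 1 ≤ w.length ∧
      ∀ t < LCPR w j i, ltr w (j - t) = ltr w (i + t) := by
  have h0 : (0 : ℕ) ∈ {ℓ | ℓ ≤ j ∧ i + ℓ - 1 ≤ w.length ∧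
      ∀ t < ℓ, ltr w (j - t) = ltr w (i + t)} :=
    ⟨Nat.zero_le _, by omega, fun t ht => absurd ht (Nat.not_lt_zero t)⟩
  exact Nat.sSup_mem ⟨0, h0⟩ ⟨j, fun x hx => hx.1⟩

lemma le_LCPR (w : List α) (j i m : ℕ) (h1 : m ≤ j) (h2 : i + m - 1 ≤ w.length)
    (h3 : ∀ t < m, ltr w (j - t) = ltr w (i + t)) : m ≤ LCPR w j i :=
  le_csSup ⟨j, fun x hx => hx.1⟩ ⟨h1, h2, h3⟩

theorem LPrFgG_eq_max_LCPR
    (w : List α) (n : ℕ) (hlen : w.length = n) (hn : 1 ≤ n)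
    (g G : ℕ) (hgG : g < G) (hGn : G ≤ n)
    (i : ℕ) (hi : 1 ≤ i) (hin : i ≤ n) :
    LPrFgG w g G i =
      sSup ({0} ∪ {m : ℕ | ∃ j : ℕ, max 1 (i - G) ≤ j ∧ j ≤ i - g - 1 ∧ m = LCPR w j i}) := by
  have hi1n : i - 1 ≤ w.length := by omega
  set R : Set ℕ := {0} ∪ {m : ℕ | ∃ j : ℕ, max 1 (i - G) ≤ j ∧ j ≤ i - g - 1 ∧ m = LCPR w j i}
    with hR
  set L : Set ℕ := {m | ∃ u v : List α, u.length = m ∧ g ≤ v.length ∧ v.length < G ∧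
    (u.reverse ++ v) <:+ fac w 1 (i - 1) ∧ u <+: fac w i w.length} with hL
  have hRbdd : BddAbove R := by
    refine ⟨n, ?_⟩
    rintro m (hm | ⟨j, hj1, hj2, rfl⟩)
    · simp only [Set.mem_singleton_iff] at hm; omega
    · have := (LCPR_mem w j i hi1n).1
      omega
  have hLbdd : BddAbove L := by
    refine ⟨n, ?_⟩
    rintro m ⟨u, v, hu, _, _, _, hpre⟩
    have := hpre.length_le
    simp [fac] at this
    omega
  have hfac1 : fac w 1 (i - 1) = w.take (i - 1) := by simp [fac]
  have hfacI : fac w i w.length = w.drop (i - 1) := by simp [fac]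
  have hR0 : (0 : ℕ) ∈ R := Or.inl rfl
  apply le_antisymm
  · -- LPrF ≤ sSup R
    rcases Set.eq_empty_or_nonempty L with hLe | hLne
    · rw [LPrFgG, ← hL, hLe, csSup_empty]
      exact Nat.zero_le _
    rw [LPrFgG, ← hL]
    apply csSup_le hLne
    rintro m ⟨u, v, hu, hg, hGv, hsuf, hpre⟩
    rcases Nat.eq_zero_or_pos m with rfl | hm
    · exact Nat.zero_le _
    rw [hfac1] at hsuf
    rw [hfacI] at hpre
    obtain ⟨s, hs⟩ := hsuf
    have hslen : s.length + (u.length + v.length) = i - 1 := by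
      have := congrArg List.length hs
      simp at this
      omega
    set j : ℕ := s.length + m with hj
    have hsu : s ++ u.reverse = w.take j := by
      have h1 : ((s ++ u.reverse) ++ v).take j = s ++ u.reverse := by
        rw [List.take_append]
        have : j - (s ++ u.reverse).length = 0 := by simp [hj, hu]
        rw [this]
        simp [List.take_of_length_le, hj, hu]
      have h2 : (s ++ u.reverse) ++ v = w.take (i - 1) := by rw [List.append_assoc]; exact hs
      rw [h2] at h1
      rw [List.take_take] at h1
      rw [← h1]
      congr 1
      omega
    have hupre : u <+: (w.take j).reverse := by
      rw [← hsu, List.reverse_append, List.reverse_reverse]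
      exact ⟨s.reverse, rfl⟩
    have hjn : j ≤ w.length := by omega
    have htj : (w.take j).length = j := by simp; omega
    have hulen : m ≤ w.length - (i - 1) := by
      have := hpre.length_le
      simp [hu] at this
      omega
    have hmatch : ∀ t < m, ltr w (j - t) = ltr w (i + t) := by
      intro t ht
      have h1 : j - t - 1 < w.length := by omega
      have h2 : i + t - 1 < w.length := by omega
      have e1 : u[t]'(by omega) = w[j - t - 1]'h1 := by
        have h := hupre.getElem (show t < u.length by omega)
        rw [h]
        simp only [List.getElem_reverse, List.getElem_take]
        congr 1
        simp only [List.length_take]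
        omega
      have e2 : u[t]'(by omega) = w[i + t - 1]'h2 := by
        have h := hpre.getElem (show t < u.length by omega)
        rw [h]
        simp only [List.getElem_drop]
        congr 1
        omega
      rw [ltr, ltr, List.getElem?_eq_getElem h1, List.getElem?_eq_getElem h2, ← e1, ← e2]
    have hmle : m ≤ LCPR w j i := le_LCPR w j i m (by omega) (by omega) hmatch
    have hjR : LCPR w j i ∈ R := by
      refine Or.inr ⟨j, ?_, ?_, rfl⟩
      · omega
      · omega
    exact le_trans hmle (le_csSup hRbdd hjR)
  · -- sSup R ≤ LPrF
    apply csSup_le ⟨0, hR0⟩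
    rintro m (hm | ⟨j, hj1, hj2, rfl⟩)
    · simp only [Set.mem_singleton_iff] at hm
      simp [hm]
    obtain ⟨hℓj, hℓn, hmatch⟩ := LCPR_mem w j i hi1n
    set ℓ : ℕ := LCPR w j i with hℓ
    have hj1' : 1 ≤ j := le_trans (le_max_left _ _) hj1
    have hjGi : i - G ≤ j := le_trans (le_max_right _ _) hj1
    have hjn : j ≤ w.length := by omega
    have hji : j ≤ i - 1 := by omega
    -- the witnesses
    set u : List α := ((w.take j).drop (j - ℓ)).reverse with hu
    set v : List α := (w.take (i - 1)).drop j with hv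
    have hulen : u.length = ℓ := by simp [hu]; omega
    have hvlen : v.length = i - 1 - j := by simp [hv]; omega
    have hsuf : (u.reverse ++ v) <:+ fac w 1 (i - 1) := by
      rw [hfac1]
      refine ⟨w.take (j - ℓ), ?_⟩
      rw [hu, List.reverse_reverse, ← List.append_assoc]
      have h1 : w.take (j - ℓ) ++ (w.take j).drop (j - ℓ) = w.take j := by
        have : w.take (j - ℓ) = (w.take j).take (j - ℓ) := by
          rw [List.take_take]; congr 1; omega
        rw [this, List.take_append_drop]
      rw [h1, hv]
      have : w.take j = (w.take (i - 1)).take j := by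
        rw [List.take_take]; congr 1; omega
      rw [this, List.take_append_drop]
    have hpre : u <+: fac w i w.length := by
      rw [hfacI]
      have hdl : ((w.drop (i - 1)).take ℓ).length = ℓ := by simp; omega
      have : u = (w.drop (i - 1)).take ℓ := by
        apply List.ext_getElem (by rw [hulen, hdl])
        intro t h1 h2
        have ht : t < ℓ := by omega
        have hx1 : j - 1 - t < w.length := by omega
        have hx2 : i - 1 + t < w.length := by omega
        have e1 : u[t]'h1 = w[j - 1 - t]'hx1 := by
          simp only [hu, List.getElem_reverse, List.getElem_drop, List.getElem_take]
          congr 1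
          simp only [List.length_drop, List.length_take]
          omega
        have e2 : ((w.drop (i - 1)).take ℓ)[t]'h2 = w[i - 1 + t]'hx2 := by
          rw [List.getElem_take, List.getElem_drop]
        rw [e1, e2]
        have := hmatch t ht
        rw [ltr, ltr, List.getElem?_eq_getElem (by omega : j - t - 1 < w.length),
          List.getElem?_eq_getElem (by omega : i + t - 1 < w.length)] at this
        have h3 : w[j - t - 1]'(by omega) = w[i + t - 1]'(by omega) :=
          Option.some.inj this
        have h4 : w[j - 1 - t]'hx1 = w[j - t - 1]'(by omega) := by congr 1; omega
        have h5 : w[i + t - 1]'(by omega) = w[i - 1 + t]'hx2 := by congr 1; omega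
        rw [h4, h3, h5]
      rw [this]
      exact List.take_prefix _ _
    have hmem : ℓ ∈ L := ⟨u, v, hulen, by omega, by omega, hsuf, hpre⟩
    exact le_csSup hLbdd hmem
end
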